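/- arXiv:2409.00793 — 5 statements merged into one kernel-verified Lean document; each statement's English description precedes it below -/
import Mathlib

section
/- Let F : A ⥤ B and U : B ⥤ A be functors between abelian categories with an adjunction F ⊣ U. If U preserves finite colimits (is right exact) and U reflects zero objects, then the Eilenberg–Moore comparison functor K : B ⥤ EM(U∘F), from B to the category of algebras over the monad U∘F on A, is an equivalence of categories (i.e., the adjunction is monadic). -/
/-!
As a right adjoint `U` is left exact, so together with right exactness it carries the kernel and
cokernel of `f` to those of `U f`; if `U f` is an isomorphism these vanish, hence so do the kernel
and cokernel of `f`, and `U` reflects isomorphisms. The crude monadicity theorem then applies: an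
algebra `(X, a)` is recovered as `U` of the coequalizer of `F a` and `ε_{F X}`, because `U`
preserves that coequalizer and `a` is the split (Beck) coequalizer of its image; and since `U`
reflects coequalizers, each `ε_Y` is the coequalizer of `F U ε_Y` and `ε_{F U Y}`, which makes the
comparison functor fully faithful.
-/

open CategoryTheory CategoryTheory.Limits

universe v₁ v₂ u₁ u₂

namespace CategoryTheory.Functor

theorem reflectsIsomorphisms_of_reflects_isZero {C : Type u₁} {D : Type u₂} [Category.{v₁} C]
    [Category.{v₂} D] [Abelian C] [Abelian D] (G : C ⥤ D) [PreservesFiniteLimits G]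
    [PreservesFiniteColimits G] (hG : ∀ X : C, IsZero (G.obj X) → IsZero X) :
    G.ReflectsIsomorphisms where
  reflects {X Y} f _ := by
    have hker : IsZero (Limits.kernel f) :=
      hG _ (((isZero_zero _).of_iso (kernel.ofMono (G.map f))).of_iso (PreservesKernel.iso G f))
    have hcoker : IsZero (Limits.cokernel f) :=
      hG _ (((isZero_zero _).of_iso (cokernel.ofEpi (G.map f))).of_iso (PreservesCokernel.iso G f))
    have := Preadditive.mono_of_isZero_kernel f hker
    have := Preadditive.epi_of_isZero_cokernel f hcoker
    exact isIso_of_mono_of_epi f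

end CategoryTheory.Functor

noncomputable section

/- Mathlib's `Monad.monadicOfHasPreservesReflexiveCoequalizersOfReflectsIsomorphisms` asks for both
categories to have morphisms in the same universe, so the crude monadicity theorem is reproved here
for arbitrary universes. -/
namespace CategoryTheory.Monad

variable {C : Type u₁} {D : Type u₂} [Category.{v₁} C] [Category.{v₂} D]
  {F : C ⥤ D} {G : D ⥤ C} (adj : F ⊣ G)

def counitCofork (Y : D) :
    Cofork (F.map (G.map (adj.counit.app Y))) (adj.counit.app (F.obj (G.obj Y))) :=
  Cofork.ofπ (adj.counit.app Y) (adj.counit_naturality _)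

variable [HasCoequalizers D] [PreservesColimitsOfShape WalkingParallelPair G]

def carrierIsoMapCoequalizer (X : adj.toMonad.Algebra) :
    X.A ≅ G.obj (coequalizer (F.map X.a) (adj.counit.app (F.obj X.A))) :=
  (beckCoequalizer X).coconePointUniqueUpToIso (isColimitOfHasCoequalizerOfPreservesColimit G _ _)

theorem a_comp_carrierIsoMapCoequalizer_hom (X : adj.toMonad.Algebra) :
    X.a ≫ (carrierIsoMapCoequalizer adj X).hom = G.map (coequalizer.π _ _) :=
  Cofork.IsColimit.π_desc (beckCoequalizer X)

theorem carrierIsoMapCoequalizer_hom_eq (X : adj.toMonad.Algebra) :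
    (carrierIsoMapCoequalizer adj X).hom = adj.unit.app X.A ≫ G.map (coequalizer.π _ _) :=
  (X.unit_assoc _).symm.trans (adj.unit.app X.A ≫= a_comp_carrierIsoMapCoequalizer_hom adj X)

theorem map_carrierIsoMapCoequalizer_hom_comp_counit (X : adj.toMonad.Algebra) :
    F.map (carrierIsoMapCoequalizer adj X).hom ≫ adj.counit.app _ = coequalizer.π _ _ := by
  rw [carrierIsoMapCoequalizer_hom_eq]
  simp

def comparisonObjCoequalizerIso (X : adj.toMonad.Algebra) :
    (comparison adj).obj (coequalizer (F.map X.a) (adj.counit.app (F.obj X.A))) ≅ X :=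
  (Algebra.isoMk (carrierIsoMapCoequalizer adj X) <|
    (G.map_comp _ _).symm.trans <|
      (congrArg G.map (map_carrierIsoMapCoequalizer_hom_comp_counit adj X)).trans
        (a_comp_carrierIsoMapCoequalizer_hom adj X).symm).symm

instance comparison_essSurj : (comparison adj).EssSurj where
  mem_essImage X := ⟨_, ⟨comparisonObjCoequalizerIso adj X⟩⟩

variable [G.ReflectsIsomorphisms]

/-- `G` maps the counit cofork to the Beck coequalizer of the algebra `(G Y, G ε_Y)`. -/
def isColimitCounitCofork (Y : D) : IsColimit (counitCofork adj Y) := by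
  have := reflectsColimit_of_reflectsIsomorphisms
    (parallelPair (F.map (G.map (adj.counit.app Y))) (adj.counit.app (F.obj (G.obj Y)))) G
  exact isColimitOfIsColimitCoforkMap G _ (beckCoequalizer ((comparison adj).obj Y))

instance epi_counit_app (Y : D) : Epi (adj.counit.app Y) :=
  Cofork.IsColimit.epi (isColimitCounitCofork adj Y)

instance comparison_faithful : (comparison adj).Faithful :=
  have := adj.faithful_R_of_epi_counit_app
  inferInstance

theorem exists_map_eq_of_map_counit_comm {Y Y' : D} (f : G.obj Y ⟶ G.obj Y')
    (hf : G.map (F.map f) ≫ G.map (adj.counit.app Y') = G.map (adj.counit.app Y) ≫ f) :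
    ∃ g : Y ⟶ Y', G.map g = f := by
  obtain ⟨g, hg⟩ : ∃ g : Y ⟶ Y', adj.counit.app Y ≫ g = F.map f ≫ adj.counit.app Y' :=
    ⟨_, (Cofork.IsColimit.desc' (isColimitCounitCofork adj Y) (F.map f ≫ adj.counit.app Y') (by
      dsimp [counitCofork]
      rw [← F.map_comp_assoc, ← hf]
      simp)).2⟩
  refine ⟨g, ?_⟩
  calc G.map g = adj.unit.app (G.obj Y) ≫ G.map (adj.counit.app Y ≫ g) := by simp
    _ = adj.unit.app (G.obj Y) ≫ G.map (F.map f ≫ adj.counit.app Y') := by rw [hg]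
    _ = f := by simp

instance comparison_full : (comparison adj).Full where
  map_surjective {Y Y'} f := by
    obtain ⟨g, hg⟩ := exists_map_eq_of_map_counit_comm adj f.f f.h
    exact ⟨g, Algebra.Hom.ext hg⟩

theorem comparison_isEquivalence : (comparison adj).IsEquivalence where

end CategoryTheory.Monad

end

/-- Beck's monadicity theorem for abelian categories: if `F ⊣ U` is an adjunction
between abelian categories such that `U` is right exact and reflects zero objects,
then the Eilenberg–Moore comparison functor `B ⥤ EM(U ∘ F)` is an equivalence. -/
theorem monadicity_of_rightExact_reflectsZero
    {A : Type*} [Category A] [Abelian A] {B : Type*} [Category B] [Abelian B]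
    (F : A ⥤ B) (U : B ⥤ A) (adj : F ⊣ U)
    [PreservesFiniteColimits U]
    (hU : ∀ X : B, IsZero (U.obj X) → IsZero X) :
    (Monad.comparison adj).IsEquivalence := by
  have := adj.rightAdjoint_preservesLimits
  have := U.reflectsIsomorphisms_of_reflects_isZero hU
  exact Monad.comparison_isEquivalence adj
end

section
/- Let C and M be abelian categories with enough projectives, and let F : C ⥤ M be a functor with right adjoint H : M ⥤ C such that F sends projective objects of C to projective objects of M. Assume that every projective object Q of M is a retract (direct summand) of F(P) for some projective object P of C. Then H reflects zero objects: if H(N) is a zero object of C, then N is a zero object of M. -/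
open CategoryTheory CategoryTheory.Limits

/-- If `F ⊣ H` is an adjunction between abelian categories with enough
projectives, `F` preserves projectives, and every projective object of `M` is a
retract of `F P` for some projective `P`, then `H` reflects zero objects. -/
theorem rightAdjoint_reflects_zero_of_projective_generator
    {C : Type*} [Category C] [Abelian C] [EnoughProjectives C]
    {M : Type*} [Category M] [Abelian M] [EnoughProjectives M]
    (F : C ⥤ M) (H : M ⥤ C) (adj : F ⊣ H)
    (hF : ∀ P : C, Projective P → Projective (F.obj P))
    (hgen : ∀ Q : M, Projective Q → ∃ P : C, Projective P ∧
      ∃ (i : Q ⟶ F.obj P) (r : F.obj P ⟶ Q), i ≫ r = 𝟙 Q) :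
    ∀ N : M, IsZero (H.obj N) → IsZero N := by
  intro N hZ
  obtain ⟨P, _, i, r, hir⟩ := hgen (Projective.over N) inferInstance
  -- every map F P ⟶ N is zero, via the adjunction
  have hzero : (r ≫ Projective.π N : F.obj P ⟶ N) = 0 := by
    have := adj.homEquiv P N
    have h1 : adj.homEquiv P N (r ≫ Projective.π N) = adj.homEquiv P N 0 :=
      hZ.eq_of_tgt _ _
    exact (adj.homEquiv P N).injective h1
  have hπ : (Projective.π N : Projective.over N ⟶ N) = 0 := by
    calc Projective.π N = i ≫ r ≫ Projective.π N := by rw [← Category.assoc, hir, Category.id_comp]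
    _ = 0 := by rw [hzero, Limits.comp_zero]
  have : Epi (Projective.π N) := inferInstance
  have hid : (𝟙 N : N ⟶ N) = 0 := by
    apply (cancel_epi (Projective.π N)).mp
    simp [hπ]
  rw [IsZero.iff_id_eq_zero]; exact hid
end

section
/- Let C and M be abelian categories with enough injectives, and let R : C ⥤ M be a functor with left adjoint L : M ⥤ C such that R sends injective objects of C to injective objects of M. Assume that every injective object J of M is a retract (direct summand) of R(I) for some injective object I of C. Then L reflects zero objects: if L(N) is a zero object of C, then N is a zero object of M. -/
open CategoryTheory CategoryTheory.Limits

/-- If `L ⊣ R` is an adjunction between abelian categories with enough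
injectives, `R` preserves injectives, and every injective object of `M` is a
retract of `R I` for some injective `I`, then `L` reflects zero objects. -/
theorem leftAdjoint_reflects_zero_of_injective_cogenerator
    {C : Type*} [Category C] [Abelian C] [EnoughInjectives C]
    {M : Type*} [Category M] [Abelian M] [EnoughInjectives M]
    (L : M ⥤ C) (R : C ⥤ M) (adj : L ⊣ R)
    (hR : ∀ I : C, Injective I → Injective (R.obj I))
    (hcog : ∀ J : M, Injective J → ∃ I : C, Injective I ∧
      ∃ (i : J ⟶ R.obj I) (r : R.obj I ⟶ J), i ≫ r = 𝟙 J) :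
    ∀ N : M, IsZero (L.obj N) → IsZero N := by
  intro N hz
  obtain ⟨I, hI, i, r, hir⟩ := hcog (Injective.under N) (Injective.injective_under N)
  have hmi : Mono i := ⟨fun g h hgh => by
    have := congrArg (· ≫ r) hgh
    simpa [hir] using this⟩
  set g : N ⟶ R.obj I := Injective.ι N ≫ i with hg
  have hmono : Mono g := mono_comp _ _
  have hg0 : g = 0 := (adj.homEquiv N I).symm.injective (hz.eq_of_src _ _)
  exact IsZero.of_mono_eq_zero g hg0
end

section
/- Let C and M be abelian categories with enough projectives, and let F : C ⥤ M be a functor admitting a right adjoint H : M ⥤ C. Assume that F sends projective objects of C to projective objects of M, and that every projective object of M is a retract (direct summand) of F(P) for some projective object P of C. Then the Eilenberg–Moore comparison functor M ⥤ EM(H∘F), to the category of algebras over the monad H∘F on C, is an equivalence of categories. -/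
/-!
Since `F` preserves projectives and `C` has enough of them, the right adjoint `H` preserves
epimorphisms, hence is exact. Every object of `M` is a quotient of some `F P`, so the counit is
epi and `H` is faithful. The comparison functor is then full: a morphism of algebras
`H Y ⟶ H Y'` descends along the (regular) epimorphism `ε_Y` because `H` is faithful. It is
essentially surjective: for an algebra `(A, a)`, exactness of `H` carries the coequalizer of `F a`
and `ε_{F A}` to the split (Beck) coequalizer of `H F a` and `H ε_{F A}`, whose vertex is `A`.
-/

open CategoryTheory Limits

namespace CategoryTheory.Monad

variable {C D : Type*} [Category C] [Category D] {F : C ⥤ D} {G : D ⥤ C} (adj : F ⊣ G)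

lemma comparison_full_of_faithful [G.Faithful] [∀ Y, IsRegularEpi (adj.counit.app Y)] :
    (comparison adj).Full where
  map_surjective {Y Y'} g := by
    let ε : F.obj (G.obj Y) ⟶ Y := adj.counit.app Y
    let f : G.obj Y ⟶ G.obj Y' := g.f
    let φ : F.obj (G.obj Y) ⟶ Y' := F.map f ≫ adj.counit.app Y'
    have hφ : G.map φ = G.map ε ≫ f := (G.map_comp _ _).trans g.h
    have hcoeq : IsRegularEpi.left ε ≫ φ = IsRegularEpi.right ε ≫ φ :=
      G.map_injective <| by
        rw [G.map_comp _ φ, G.map_comp _ φ, hφ, ← G.map_comp_assoc, ← G.map_comp_assoc,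
          IsRegularEpi.w]
    let d := IsRegularEpi.desc ε φ hcoeq
    refine ⟨d, Algebra.Hom.ext ?_⟩
    calc G.map d = adj.unit.app (G.obj Y) ≫ G.map (ε ≫ d) := by
          rw [G.map_comp, adj.right_triangle_components_assoc]
      _ = adj.unit.app (G.obj Y) ≫ G.map φ := by rw [IsRegularEpi.fac]
      _ = f := by simp [φ]

lemma comparison_essSurj_of_preservesCoequalizers [HasCoequalizers D]
    [PreservesColimitsOfShape WalkingParallelPair G] : (comparison adj).EssSurj where
  mem_essImage A := by
    let a : G.obj (F.obj A.A) ⟶ A.A := A.a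
    let ε : F.obj (G.obj (F.obj A.A)) ⟶ F.obj A.A := adj.counit.app _
    let π : F.obj A.A ⟶ coequalizer (F.map a) ε := coequalizer.π _ _
    let e : A.A ≅ G.obj (coequalizer (F.map a) ε) :=
      (beckCoequalizer A).coconePointUniqueUpToIso
        (isColimitOfHasCoequalizerOfPreservesColimit G _ _)
    have he : a ≫ e.hom = G.map π :=
      (beckCoequalizer A).comp_coconePointUniqueUpToIso_hom _ WalkingParallelPair.one
    have he' : e.hom = adj.unit.app A.A ≫ G.map π := by
      rw [← he]; exact (A.unit_assoc _).symm
    refine ⟨_, ⟨(Algebra.isoMk e ?_).symm⟩⟩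
    show G.map (F.map e.hom) ≫ G.map (adj.counit.app _) = a ≫ e.hom
    rw [he, ← G.map_comp, he']
    simp

lemma comparison_isEquivalence_of_faithful [G.Faithful]
    [∀ Y, IsRegularEpi (adj.counit.app Y)] [HasCoequalizers D]
    [PreservesColimitsOfShape WalkingParallelPair G] : (comparison adj).IsEquivalence where
  full := comparison_full_of_faithful adj
  essSurj := comparison_essSurj_of_preservesCoequalizers adj

end CategoryTheory.Monad

namespace CategoryTheory.Adjunction

variable {C D : Type*} [Category C] [Category D] {F : C ⥤ D} {G : D ⥤ C} (adj : F ⊣ G)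

lemma epi_counit_app_of_epi {P : C} {Y : D} (p : F.obj P ⟶ Y) [Epi p] :
    Epi (adj.counit.app Y) :=
  epi_of_epi_fac (f := F.map (adj.unit.app P ≫ G.map p)) (h := p) (by simp)

lemma epi_counit_app_of_projective_retract [EnoughProjectives D]
    (h : ∀ Q : D, Projective Q → ∃ P : C, ∃ (i : Q ⟶ F.obj P) (r : F.obj P ⟶ Q), i ≫ r = 𝟙 Q)
    (Y : D) : Epi (adj.counit.app Y) := by
  obtain ⟨P, i, r, hir⟩ := h (Projective.over Y) inferInstance
  have : Epi (r ≫ Projective.π Y) :=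
    epi_of_epi_fac (f := i) (by rw [← Category.assoc, hir, Category.id_comp])
  exact adj.epi_counit_app_of_epi (r ≫ Projective.π Y)

end CategoryTheory.Adjunction

lemma CategoryTheory.Functor.preservesFiniteColimits_of_preservesEpimorphisms {C D : Type*}
    [Category C] [Category D] [Abelian C] [Abelian D] (G : D ⥤ C) [G.IsRightAdjoint]
    [G.PreservesEpimorphisms] : PreservesFiniteColimits G := by
  have : G.Additive := G.additive_of_preserves_binary_products
  have : G.PreservesHomology := G.preservesHomology_of_preservesEpis_and_kernels
  exact G.preservesFiniteColimits_of_preservesHomology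

/-- Reconstruction: if `F ⊣ H` is an adjunction between abelian categories with
enough projectives such that `F` preserves projectives and every projective of
`M` is a retract of `F P` for a projective `P`, then the Eilenberg–Moore
comparison functor `M ⥤ EM(H ∘ F)` is an equivalence. -/
theorem comparison_equivalence_of_projective_generator
    {C : Type*} [Category C] [Abelian C] [EnoughProjectives C]
    {M : Type*} [Category M] [Abelian M] [EnoughProjectives M]
    (F : C ⥤ M) (H : M ⥤ C) (adj : F ⊣ H)
    (hF : ∀ P : C, Projective P → Projective (F.obj P))
    (hgen : ∀ Q : M, Projective Q → ∃ P : C, Projective P ∧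
      ∃ (i : Q ⟶ F.obj P) (r : F.obj P ⟶ Q), i ≫ r = 𝟙 Q) :
    (Monad.comparison adj).IsEquivalence := by
  have : F.PreservesProjectiveObjects := ⟨hF _⟩
  have : H.PreservesEpimorphisms :=
    Functor.preservesEpimorphisms_of_adjunction_of_preservesProjectiveObjects adj
  have : H.IsRightAdjoint := adj.isRightAdjoint
  have : PreservesFiniteColimits H := H.preservesFiniteColimits_of_preservesEpimorphisms
  have : ∀ Y, Epi (adj.counit.app Y) :=
    adj.epi_counit_app_of_projective_retract fun Q hQ => (hgen Q hQ).imp fun _ h => h.2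
  have : H.Faithful := adj.faithful_R_of_epi_counit_app
  have : ∀ Y, IsRegularEpi (adj.counit.app Y) := fun Y => IsRegularEpiCategory.regularEpiOfEpi _
  exact Monad.comparison_isEquivalence_of_faithful adj
end

section
/- Let C and M be abelian categories with enough injectives, and let R : C ⥤ M be a functor admitting a left adjoint L : M ⥤ C. Assume that R sends injective objects of C to injective objects of M, and that every injective object of M is a retract (direct summand) of R(I) for some injective object I of C. Then the Eilenberg–Moore comparison functor M ⥤ EM(L∘R), to the category of coalgebras over the comonad L∘R on C, is an equivalence of categories. -/
/-!
Through an injective envelope, the cogenerator hypothesis embeds every `Y` into some `R I`, so the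
unit `Y ⟶ R (L Y)` is mono and `L` is faithful. A coalgebra map `L Y ⟶ L Y'` then lifts along
`L`, because its transpose `Y ⟶ R (L Y')` vanishes on the cokernel of the unit at `Y'`.
Since `R` preserves injectives, `L` preserves monomorphisms and is therefore exact. For a coalgebra
`(A, a)`, `L` sends the equalizer of `R a` and the unit at `R A` to the split equalizer of
`L R a` and `L η_{R A}` formed by `a`, which exhibits `(A, a)` as a comparison coalgebra.
-/

open CategoryTheory CategoryTheory.Limits

namespace CategoryTheory

variable {C M : Type*} [Category C] [Category M] {L : M ⥤ C} {R : C ⥤ M}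

namespace Adjunction

lemma preservesFiniteLimits_of_preservesInjectiveObjects [Abelian C] [Abelian M]
    [EnoughInjectives C] (adj : L ⊣ R) [R.PreservesInjectiveObjects] : PreservesFiniteLimits L := by
  have := Functor.preservesMonomorphisms_of_adjunction_of_preservesInjectiveObjects adj
  have := adj.leftAdjoint_preservesColimits
  have := L.preservesHomology_of_preservesMonos_and_cokernels
  have := adj.rightAdjoint_preservesLimits
  have := R.additive_of_preserves_binary_products
  have := adj.left_adjoint_additive
  exact L.preservesFiniteLimits_of_preservesHomology

variable (adj : L ⊣ R)

lemma mono_unit_app_of_mono {Y : M} {I : C} (j : Y ⟶ R.obj I) [Mono j] :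
    Mono (adj.unit.app Y) :=
  mono_of_mono_fac ((adj.unit_comp_map_eq_iff _ j).2 rfl)

instance mono_map_unit_app (Y : M) : Mono (L.map (adj.unit.app Y)) :=
  (SplitMono.mk _ (adj.left_triangle_components Y)).mono

lemma exists_map_eq_of_mono_unit_app [Abelian M] [HasZeroMorphisms C] [L.PreservesZeroMorphisms]
    (h : ∀ Y, Mono (adj.unit.app Y)) {Y Y' : M} (g : L.obj Y ⟶ L.obj Y')
    (hg : L.map (adj.unit.app Y) ≫ L.map (R.map g) = g ≫ L.map (adj.unit.app Y')) :
    ∃ f : Y ⟶ Y', L.map f = g := by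
  have := adj.faithful_L_of_mono_unit_app
  let u : Y ⟶ R.obj (L.obj Y') := adj.unit.app Y ≫ R.map g
  have hu : L.map u = g ≫ L.map (adj.unit.app Y') := by rw [L.map_comp, hg]
  have hcok : u ≫ cokernel.π (adj.unit.app Y') = 0 := L.map_injective (by
    rw [L.map_comp, hu, Category.assoc, ← L.map_comp, cokernel.condition, L.map_zero, comp_zero,
      L.map_zero])
  refine ⟨Abelian.monoLift _ u hcok, ?_⟩
  rw [← cancel_mono (L.map (adj.unit.app Y')), ← hu, ← L.map_comp, Abelian.monoLift_comp]

lemma unit_app_comp_map_eq_of_comp_eq {X : C} {a : X ⟶ L.obj (R.obj X)}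
    (ha : a ≫ adj.counit.app X = 𝟙 X) {Y : M} {ι : Y ⟶ R.obj X}
    (hι : ι ≫ R.map a = ι ≫ adj.unit.app (R.obj X)) {e : L.obj Y ⟶ X} (he : e ≫ a = L.map ι) :
    adj.unit.app Y ≫ R.map e = ι := by
  have : Mono (R.map a) := ((SplitMono.mk _ ha).map R).mono
  rw [← cancel_mono (R.map a), Category.assoc, ← R.map_comp, he, hι]
  exact (adj.unit.naturality ι).symm

end Adjunction

namespace Comonad

variable (adj : L ⊣ R)

lemma comparison_full_of_mono_unit_app [Abelian M] [HasZeroMorphisms C] [L.PreservesZeroMorphisms]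
    (h : ∀ Y, Mono (adj.unit.app Y)) : (comparison adj).Full where
  map_surjective φ := by
    obtain ⟨f, hf⟩ := adj.exists_map_eq_of_mono_unit_app h φ.f φ.h
    exact ⟨f, Coalgebra.Hom.ext hf⟩

lemma comparison_essSurj [HasEqualizers M] [PreservesLimitsOfShape WalkingParallelPair L] :
    (comparison adj).EssSurj where
  mem_essImage A := by
    let ι := equalizer.ι (R.map A.a) (adj.unit.app (R.obj A.A))
    let e : L.obj (equalizer (R.map A.a) (adj.unit.app (R.obj A.A))) ≅ A.A :=
      IsLimit.conePointUniqueUpToIso (isLimitOfHasEqualizerOfPreservesLimit L _ _) (beckEqualizer A)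
    have he : e.hom ≫ A.a = L.map ι :=
      IsLimit.conePointUniqueUpToIso_hom_comp _ _ WalkingParallelPair.zero
    have key := adj.unit_app_comp_map_eq_of_comp_eq A.counit (equalizer.condition _ _) he
    exact ⟨_, ⟨Coalgebra.isoMk e ((L.map_comp _ _).symm.trans ((congrArg L.map key).trans he.symm))⟩⟩

end Comonad

end CategoryTheory

/-- Reconstruction: if `L ⊣ R` is an adjunction between abelian categories with
enough injectives such that `R` preserves injectives and every injective of `M`
is a retract of `R I` for an injective `I`, then the Eilenberg–Moore comparison
functor `M ⥤ EM(L ∘ R)` (coalgebras over the comonad `L ∘ R` on `C`) is an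
equivalence. -/
theorem comparison_equivalence_of_injective_cogenerator
    {C : Type*} [Category C] [Abelian C] [EnoughInjectives C]
    {M : Type*} [Category M] [Abelian M] [EnoughInjectives M]
    (L : M ⥤ C) (R : C ⥤ M) (adj : L ⊣ R)
    (hR : ∀ I : C, Injective I → Injective (R.obj I))
    (hcog : ∀ J : M, Injective J → ∃ I : C, Injective I ∧
      ∃ (i : J ⟶ R.obj I) (r : R.obj I ⟶ J), i ≫ r = 𝟙 J) :
    (Comonad.comparison adj).IsEquivalence := by
  have : R.PreservesInjectiveObjects := ⟨hR _⟩
  have := adj.preservesFiniteLimits_of_preservesInjectiveObjects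
  have hunit (Y : M) : Mono (adj.unit.app Y) := by
    obtain ⟨I, -, i, r, hir⟩ := hcog (Injective.under Y) inferInstance
    have : Mono i := (SplitMono.mk r hir).mono
    exact adj.mono_unit_app_of_mono (Injective.ι Y ≫ i)
  have := adj.faithful_L_of_mono_unit_app
  have := Comonad.comparison_full_of_mono_unit_app adj hunit
  have := Comonad.comparison_essSurj adj
  exact {}
end
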